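/- Fix a vector b̲ = (ℓ_1,…,ℓ_b) of positive even integers. Every polynomial p in the space P_{b̲} of polynomials of type b̲ has a unique decomposition (q_1,…,q_b); equivalently, the coefficients a_1,…,a_b (and hence the maps q_1,…,q_b) are uniquely determined by p. -/

import Mathlib

open Set Filter Topology

noncomputable section

/-- The interval `I = [-1,1]`. -/
def unitI : Set ℝ := Set.Icc (-1 : ℝ) 1



/-! ### The interval `I = [-1,1]` and basic dynamical notions -/


/-- The set of periods of periodic points of `f` lying in `D`. -/
def PeriodSetOn (f : ℝ → ℝ) (D : Set ℝ) : Set ℕ :=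
  {n | 0 < n ∧ ∃ p ∈ D, f^[n] p = p}

/-- The set of periods `Per(f)` of an interval map `f : I → I`. -/
def PeriodSet (f : ℝ → ℝ) : Set ℕ := PeriodSetOn f unitI

/-- The set `{2^n : n ∈ ℕ}`. -/
def PowersOfTwo : Set ℕ := {m | ∃ n : ℕ, m = 2 ^ n}

/-- `f` is monotone (increasing or decreasing) on `s`. -/
def MonotoneOrAntitoneOn (f : ℝ → ℝ) (s : Set ℝ) : Prop :=
  MonotoneOn f s ∨ AntitoneOn f s

/-- `[u,v]` can be divided into `n` consecutive intervals on each of which `f`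
is monotone; hence the lap number of `f` on `[u,v]` is at most `n`. -/
def LapBoundOn (f : ℝ → ℝ) (u v : ℝ) (n : ℕ) : Prop :=
  ∃ x : Fin (n + 1) → ℝ, StrictMono x ∧ x 0 = u ∧ x (Fin.last n) = v ∧
    ∀ i : Fin n, MonotoneOrAntitoneOn f (Set.Icc (x i.castSucc) (x i.succ))

/-- The lap number `ℓ(f)` of a piecewise monotone map `f` of `[u,v]`:
the least number of maximal intervals of monotonicity. -/
def lapNumberOn (f : ℝ → ℝ) (u v : ℝ) : ℕ :=
  sInf {n | LapBoundOn f u v n}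

/-- Topological entropy of a piecewise monotone map of `[u,v]`,
`h(f) = lim (1/n) log ℓ(fⁿ)` (as an upper limit). -/
def topEntropyOn (f : ℝ → ℝ) (u v : ℝ) : ℝ :=
  Filter.limsup (fun n : ℕ => Real.log (lapNumberOn (f^[n]) u v) / (n : ℝ)) Filter.atTop

/-- Topological entropy of a piecewise monotone map of `I = [-1,1]`. -/
def topEntropy (f : ℝ → ℝ) : ℝ := topEntropyOn f (-1) 1

/-- `c` is a turning point (an isolated local extremum) of `f` lying in the interior
of the domain `K`. -/
def TurningPtIn (f : ℝ → ℝ) (K : Set ℝ) (c : ℝ) : Prop :=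
  c ∈ interior K ∧
  ((∃ ε > 0, ∀ x ∈ Set.Ioo (c - ε) (c + ε), x ≠ c → f x < f c) ∨
   (∃ ε > 0, ∀ x ∈ Set.Ioo (c - ε) (c + ε), x ≠ c → f c < f x))

/-- A turning point of an interval map `f : I → I`. -/
def TurningPoint (f : ℝ → ℝ) (c : ℝ) : Prop := TurningPtIn f unitI c

/-- A multimodal map: a continuous piecewise monotone map `f : I → I` with
`f(∂I) ⊆ ∂I`. -/
structure Multimodal (f : ℝ → ℝ) : Prop where
  cont : ContinuousOn f unitI
  maps : Set.MapsTo f unitI unitI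
  bdry : f (-1) ∈ ({-1, 1} : Set ℝ) ∧ f 1 ∈ ({-1, 1} : Set ℝ)
  pm : ∃ n, LapBoundOn f (-1) 1 n

/-- A continuous piecewise monotone map `f : I → I`. -/
def PiecewiseMonotone (f : ℝ → ℝ) : Prop :=
  ContinuousOn f unitI ∧ Set.MapsTo f unitI unitI ∧ ∃ n, LapBoundOn f (-1) 1 n

/-! ### Smooth multimodal maps and the spaces `A^k_b(I)` -/

/-- A `C^k` multimodal map: `f` is multimodal and `C^k` on a neighbourhood of `I`. -/
def CkMultimodal (k : ℕ) (f : ℝ → ℝ) : Prop :=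
  Multimodal f ∧ ∃ U : Set ℝ, IsOpen U ∧ unitI ⊆ U ∧ ContDiffOn ℝ (k : ℕ∞) f U

/-- The `C^k` distance `‖f - g‖_{C^k(I)}` (sum over `0 ≤ i ≤ k` of the sup of the
`i`-th derivatives on `I`). -/
def CkDist (k : ℕ) (f g : ℝ → ℝ) : ℝ :=
  ∑ i ∈ Finset.range (k + 1),
    ⨆ x : unitI, |iteratedDeriv i f (x : ℝ) - iteratedDeriv i g (x : ℝ)|

/-- `c` is a critical point of `f` of order `ℓ`: near `c`,
`f(x) = ± φ(x-c)^ℓ + f(c)` for a local `C^k` diffeomorphism `φ` with `φ(0) = 0`. -/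
def CritOrder (k : ℕ∞) (f : ℝ → ℝ) (c : ℝ) (ℓ : ℕ) : Prop :=
  ∃ ε > 0, ∃ φ : ℝ → ℝ, φ 0 = 0 ∧ deriv φ 0 ≠ 0 ∧
    ContDiffOn ℝ k φ (Set.Ioo (-ε) ε) ∧ Set.InjOn φ (Set.Ioo (-ε) ε) ∧
    ((∀ x ∈ Set.Ioo (c - ε) (c + ε), f x = (φ (x - c)) ^ ℓ + f c) ∨
     (∀ x ∈ Set.Ioo (c - ε) (c + ε), f x = -((φ (x - c)) ^ ℓ) + f c))

/-- `f` has finitely many parabolic cycles: finitely many periodic points whose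
multiplier has absolute value one. -/
def FinitelyManyParabolic (f : ℝ → ℝ) : Prop :=
  {p : ℝ | p ∈ unitI ∧ ∃ n, 0 < n ∧ f^[n] p = p ∧ |deriv (f^[n]) p| = 1}.Finite

/-- The space `A^k_{b̲}(I)` of `C^k` multimodal maps with finitely many parabolic
cycles and exactly `b` critical points `c₁ < ⋯ < c_b`, `cᵢ` of order `ℓᵢ = bvec i`. -/
structure SpaceA (k : ℕ∞) {b : ℕ} (bvec : Fin b → ℕ) (f : ℝ → ℝ) : Prop where
  multimodal : Multimodal f
  smooth : ∃ U : Set ℝ, IsOpen U ∧ unitI ⊆ U ∧ ContDiffOn ℝ k f U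
  parabolic : FinitelyManyParabolic f
  crit : ∃ c : Fin b → ℝ, StrictMono c ∧ (∀ i, c i ∈ Set.Ioo (-1 : ℝ) 1) ∧
      (∀ i, CritOrder k f (c i) (bvec i)) ∧
      {x ∈ Set.Ioo (-1 : ℝ) 1 | deriv f x = 0} = Set.range c

/-- The space `A_{b̲}(I)` of real-analytic maps in `A^∞_{b̲}(I)`. -/
def SpaceAomega {b : ℕ} (bvec : Fin b → ℕ) (f : ℝ → ℝ) : Prop :=
  SpaceA ⊤ bvec f ∧ ∃ U : Set ℝ, IsOpen U ∧ unitI ⊆ U ∧ AnalyticOnNhd ℝ f U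

/-- The space `A^r_{b̲}(I)` for a real smoothness exponent `r = k + α`:
`C^k` together with an `α`-Hölder condition on the `k`-th derivative. -/
def SpaceAr (r : ℝ) {b : ℕ} (bvec : Fin b → ℕ) (f : ℝ → ℝ) : Prop :=
  SpaceA (⌊r⌋₊ : ℕ∞) bvec f ∧
  ∃ C : NNReal, HolderOnWith C (Real.toNNReal (r - (⌊r⌋₊ : ℝ)))
    (iteratedDeriv ⌊r⌋₊ f) unitI

/-- The space `A^r_{even,b}(I)`: the union of the `A^r_{b̲}(I)` over all `b`-tuples
`b̲` with all entries even. -/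
def SpaceArEven (r : ℝ) (b : ℕ) (f : ℝ → ℝ) : Prop :=
  ∃ bvec : Fin b → ℕ, (∀ i, Even (bvec i) ∧ 2 ≤ bvec i) ∧ SpaceAr r bvec f

/-- All critical points of `f` (in the interior of `I`) are non-degenerate. -/
def NonDegCrit (f : ℝ → ℝ) : Prop :=
  ∀ x ∈ Set.Ioo (-1 : ℝ) 1, deriv f x = 0 → deriv (deriv f) x ≠ 0

/-! ### Restrictive intervals and renormalization -/

/-- Auxiliary predicate: `[a,b] ⊆ K` is a proper subinterval whose first `n`
iterates have pairwise disjoint interiors, with `fⁿ([a,b]) ⊆ [a,b]`,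
`fⁿ({a,b}) ⊆ {a,b}`, and whose orbit contains a turning point of `f|_K`. -/
structure RIAuxIn (f : ℝ → ℝ) (K : Set ℝ) (a b : ℝ) (n : ℕ) : Prop where
  lt : a < b
  sub : Set.Icc a b ⊆ K
  proper : Set.Icc a b ≠ K
  pos : 0 < n
  disj : ∀ i j : ℕ, i < j → j < n →
    interior (f^[i] '' Set.Icc a b) ∩ interior (f^[j] '' Set.Icc a b) = ∅
  inv : f^[n] '' Set.Icc a b ⊆ Set.Icc a b
  bdryInv : f^[n] a ∈ ({a, b} : Set ℝ) ∧ f^[n] b ∈ ({a, b} : Set ℝ)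
  turning : ∃ i < n, ∃ c, TurningPtIn f K c ∧ c ∈ f^[i] '' Set.Icc a b

/-- A restrictive interval of period `n` of `f|_K` (maximal among such intervals
of period `n`). -/
def RestrictiveIntervalIn (f : ℝ → ℝ) (K : Set ℝ) (J : Set ℝ) (n : ℕ) : Prop :=
  ∃ a b : ℝ, J = Set.Icc a b ∧ RIAuxIn f K a b n ∧
    ∀ a' b' : ℝ, RIAuxIn f K a' b' n → Set.Icc a b ⊆ Set.Icc a' b' →
      Set.Icc a' b' = Set.Icc a b

/-- A restrictive interval of period `n` for the interval map `f` of `[u,v]`. -/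
def RestrictiveIntervalOn (f : ℝ → ℝ) (u v : ℝ) (J : Set ℝ) (n : ℕ) : Prop :=
  RestrictiveIntervalIn f (Set.Icc u v) J n

/-- A restrictive interval of period `n` for the interval map `f : I → I`. -/
def RestrictiveInterval (f : ℝ → ℝ) (J : Set ℝ) (n : ℕ) : Prop :=
  RestrictiveIntervalIn f unitI J n

/-- A restrictive interval of `f|_K` which is maximal (outermost) among all
restrictive intervals of `f|_K` of all periods. -/
def OutermostRIIn (f : ℝ → ℝ) (K : Set ℝ) (J : Set ℝ) (n : ℕ) : Prop :=
  ∃ a b : ℝ, J = Set.Icc a b ∧ RIAuxIn f K a b n ∧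
    ∀ a' b' : ℝ, ∀ n' : ℕ, RIAuxIn f K a' b' n' → Set.Icc a b ⊆ Set.Icc a' b' →
      Set.Icc a' b' = Set.Icc a b

/-- `f` is infinitely renormalizable: it has restrictive intervals of arbitrarily
large period. -/
def InfinitelyRenormalizable (f : ℝ → ℝ) : Prop :=
  ∀ N : ℕ, ∃ (J : Set ℝ) (n : ℕ), N < n ∧ RestrictiveInterval f J n

/-- The sets `K_n` of the decomposition of the non-wandering set: `K_0 = I` and
`K_{n+1}` is the union of all maximal restrictive intervals of `f|_{K_n}`. -/
def Kset (f : ℝ → ℝ) : ℕ → Set ℝ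
  | 0 => unitI
  | n + 1 => ⋃₀ {J | ∃ m, OutermostRIIn f (Kset f n) J m}

/-- `x` is a non-wandering point of the interval map `f : I → I`. -/
def NonWandering (f : ℝ → ℝ) (x : ℝ) : Prop :=
  x ∈ unitI ∧ ∀ U : Set ℝ, IsOpen U → x ∈ U →
    ∃ n : ℕ, 0 < n ∧ (f^[n] '' (U ∩ unitI) ∩ U).Nonempty

/-! ### Omega-limit sets, attractors and essential conjugacy -/

/-- The ω-limit set of `x` under `f`. -/
def omegaLimitSet (f : ℝ → ℝ) (x : ℝ) : Set ℝ :=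
  ⋂ N : ℕ, closure {y | ∃ n : ℕ, N ≤ n ∧ f^[n] x = y}

/-- `p` is an attracting periodic point of `f` of period `n`. -/
def AttractingPeriodic (f : ℝ → ℝ) (p : ℝ) (n : ℕ) : Prop :=
  0 < n ∧ p ∈ unitI ∧ f^[n] p = p ∧
    ∃ ε > 0, ∀ y ∈ unitI, |y - p| < ε →
      Filter.Tendsto (fun k => f^[n * k] y) Filter.atTop (nhds p)

/-- The union of the basins of attraction of the (attracting) periodic orbits of `f`. -/
def basinPts (f : ℝ → ℝ) : Set ℝ :=
  {x | x ∈ unitI ∧ ∃ p n m, AttractingPeriodic f p n ∧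
    Filter.Tendsto (fun k => f^[n * k + m] x) Filter.atTop (nhds p)}

/-- `f` and `g` are essentially conjugate: topologically conjugate outside their
basins of attraction. -/
def EssentiallyConjugate (f g : ℝ → ℝ) : Prop :=
  ∃ h : ℝ → ℝ, Set.BijOn h (unitI \ basinPts f) (unitI \ basinPts g) ∧
    ContinuousOn h (unitI \ basinPts f) ∧
    ContinuousOn (Function.invFunOn h (unitI \ basinPts f)) (unitI \ basinPts g) ∧
    ∀ x ∈ unitI \ basinPts f, h (f x) = g (h x)

/-! ### Polynomials of type `b̲` -/

/-- `q = A⁻¹ ∘ p ∘ A` where `p(z) = z^ℓ + a` has an invariant interval `J` and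
`A : I → J` is an affine bijection. -/
def IsQFactor (ℓ : ℕ) (a : ℝ) (q : ℝ → ℝ) : Prop :=
  ∃ α β : ℝ, α ≠ 0 ∧
    (∀ z ∈ (fun x : ℝ => α * x + β) '' unitI,
        z ^ ℓ + a ∈ (fun x : ℝ => α * x + β) '' unitI) ∧
    (∀ x : ℝ, α * q x + β = (α * x + β) ^ ℓ + a)

/-- `p` is a polynomial of type `b̲` with decomposition `(q₁, …, q_b)` and
coefficients `(a₁, …, a_b)`. -/
structure IsPolyType {b : ℕ} (bvec : Fin b → ℕ) (p : ℝ → ℝ) (a : Fin b → ℝ)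
    (q : Fin b → ℝ → ℝ) : Prop where
  posb : 0 < b
  factor : ∀ i, IsQFactor (bvec i) (a i) (q i)
  maps : ∀ i, Set.MapsTo (q i) unitI unitI
  endpts : ∀ i, q i (-1) = -1 ∧ q i 1 = -1
  mid : ∀ i : Fin b, (i : ℕ) + 1 ≠ b → 0 < q i 0
  comp : ∀ x : ℝ, p x = (List.ofFn q).foldl (fun y g => g y) x

/-- An enumeration, in increasing order, of all turning points of `f`. -/
def TurningEnum (f : ℝ → ℝ) {r : ℕ} (c : Fin r → ℝ) : Prop :=
  StrictMono c ∧ (∀ i, TurningPoint f (c i)) ∧ ∀ x, TurningPoint f x → x ∈ Set.range c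

/-- `f` and `g` have the same shape: they have the same number of turning points and
the order relations among the corresponding critical values coincide. -/
def SameShape (f g : ℝ → ℝ) : Prop :=
  ∃ (r : ℕ) (c d : Fin r → ℝ), TurningEnum f c ∧ TurningEnum g d ∧
    ∀ i j, f (c i) < f (c j) ↔ g (d i) < g (d j)

/-- `f` and `g` have the same critical values at corresponding turning points. -/
def SameShapeValues (f g : ℝ → ℝ) : Prop :=
  ∃ (r : ℕ) (c d : Fin r → ℝ), TurningEnum f c ∧ TurningEnum g d ∧
    ∀ i, f (c i) = g (d i)





/-! ### Stunted sawtooth maps -/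

/-- The slope `λ = m + 2`. -/
def sawLam (m : ℕ) : ℝ := (m : ℝ) + 2

/-- The endpoint `e = mλ/(λ-1)` of the domain `[-e,e]`. -/
def sawE (m : ℕ) : ℝ := (m : ℝ) * sawLam m / (sawLam m - 1)

/-- The domain `[-e,e]` of the sawtooth maps. -/
def sawDom (m : ℕ) : Set ℝ := Set.Icc (-(sawE m)) (sawE m)

/-- The turning points `c_i = -m+1, -m+3, …, m-1`. -/
def sawC (m : ℕ) (i : Fin m) : ℝ := -(m : ℝ) + 1 + 2 * (i : ℕ)

/-- The basic piecewise linear sawtooth map `S₀` with turning points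
`-m+1, -m+3, …, m-1`, slopes `±λ` and extremal values `±λ`; `ε = ±1` is its basic
shape (`ε = 1` iff `S₀` is increasing at the left endpoint). -/
def sawS0 (m : ℕ) (ε : ℤ) (x : ℝ) : ℝ :=
  sawLam m *
    (|Int.fract ((x - (if ε = 1 then (-(m : ℝ) + 1) else (-(m : ℝ) + 3))) / 4) * 4 - 2| - 1)

/-- The sign of the turning point `c_i`: `+1` if `c_i` is a maximum of `S₀`,
`-1` if it is a minimum. -/
def sawSign (m : ℕ) (ε : ℤ) (i : Fin m) : ℝ := by
  classical exact if sawS0 m ε (sawC m i) = sawLam m then 1 else -1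

/-- A stunted sawtooth map `T` with plateaus `Z i` (closed symmetric intervals
around the turning points `c_i`, with pairwise disjoint interiors) on which `T` is
constant with value `v i ∈ [-e,e]`, and which agrees with `S₀` off the plateaus. -/
structure IsStunted (m : ℕ) (ε : ℤ) (T : ℝ → ℝ) (Z : Fin m → Set ℝ) (v : Fin m → ℝ) :
    Prop where
  plateau : ∀ i, ∃ δ : ℝ, 0 ≤ δ ∧ Z i = Set.Icc (sawC m i - δ) (sawC m i + δ)
  subDom : ∀ i, Z i ⊆ sawDom m
  disj : ∀ i j, i ≠ j → interior (Z i) ∩ interior (Z j) = ∅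
  agree : ∀ x ∈ sawDom m, x ∉ ⋃ i, Z i → T x = sawS0 m ε x
  plateauVal : ∀ i, v i ∈ sawDom m ∧ ∀ x ∈ Z i, T x = v i
  cont : ContinuousOn T (sawDom m)
  maps : Set.MapsTo T (sawDom m) (sawDom m)





/-! ### Polynomial-like maps -/

/-- A polynomial-like map of degree `d`: a proper holomorphic degree-`d` branched
covering `F : U → V` between simply connected domains with `U ⋐ V`. -/
structure PolyLikeMap (F : ℂ → ℂ) (U V : Set ℂ) (d : ℕ) : Prop where
  openU : IsOpen U
  openV : IsOpen V
  neU : U.Nonempty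
  cpt : IsCompact (closure U)
  subUV : closure U ⊆ V
  connU : IsPreconnected U
  connV : IsPreconnected V
  simpU : SimplyConnectedSpace U
  simpV : SimplyConnectedSpace V
  holo : DifferentiableOn ℂ F U
  mapsto : Set.MapsTo F U V
  proper : ∀ K : Set ℂ, K ⊆ V → IsCompact K → IsCompact (U ∩ F ⁻¹' K)
  surj : Set.SurjOn F U V
  degree : ∀ w ∈ V, (∀ z ∈ U ∩ F ⁻¹' {w}, deriv F z ≠ 0) → (U ∩ F ⁻¹' {w}).ncard = d

/-- A proper holomorphic degree-`d` branched covering between simply connected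
domains with exactly one ramification point. -/
structure BranchedCover (F : ℂ → ℂ) (U V : Set ℂ) (d : ℕ) : Prop where
  openU : IsOpen U
  openV : IsOpen V
  neU : U.Nonempty
  connU : IsPreconnected U
  connV : IsPreconnected V
  simpU : SimplyConnectedSpace U
  simpV : SimplyConnectedSpace V
  holo : DifferentiableOn ℂ F U
  mapsto : Set.MapsTo F U V
  proper : ∀ K : Set ℂ, K ⊆ V → IsCompact K → IsCompact (U ∩ F ⁻¹' K)
  surj : Set.SurjOn F U V
  oneCrit : ∃! z : ℂ, z ∈ U ∧ deriv F z = 0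
  degree : ∀ w ∈ V, (∀ z ∈ U ∩ F ⁻¹' {w}, deriv F z ≠ 0) → (U ∩ F ⁻¹' {w}).ncard = d

/-- The composition `F_b ∘ ⋯ ∘ F_1` (applying `F_1` first). -/
def compFold {b : ℕ} (Fi : Fin b → ℂ → ℂ) (z : ℂ) : ℂ :=
  (List.ofFn Fi).foldl (fun w g => g w) z

/-- A polynomial-like map of type `b̲ = (ℓ₁, …, ℓ_b)`: a composition of
branched coverings `F_i : U_i → U_{i+1}` of degree `ℓᵢ`, each with exactly one
ramification point, with `U ⋐ V`. -/
def PolyLikeType {b : ℕ} (bvec : Fin b → ℕ) (F : ℂ → ℂ) (U V : Set ℂ) : Prop :=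
  IsCompact (closure U) ∧ closure U ⊆ V ∧
  ∃ (W : Fin (b + 1) → Set ℂ) (Fi : Fin b → ℂ → ℂ),
    W 0 = U ∧ W (Fin.last b) = V ∧
    (∀ i : Fin b, BranchedCover (Fi i) (W i.castSucc) (W i.succ) (bvec i)) ∧
    ∀ z ∈ U, F z = compFold Fi z

/-- `F : U → V` is real-symmetric: `U`, `V` are invariant under complex conjugation
and `F` commutes with it. -/
def RealSymPL (F : ℂ → ℂ) (U V : Set ℂ) : Prop :=
  (∀ z ∈ U, (starRingEnd ℂ) z ∈ U) ∧ (∀ z ∈ V, (starRingEnd ℂ) z ∈ V) ∧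
  ∀ z ∈ U, F ((starRingEnd ℂ) z) = (starRingEnd ℂ) (F z)





/-! ### Topologies on spaces of maps, cells, and Banach submanifolds -/

/-- Index type for the `C^{k+α}` jet of a map: the `k+1` derivatives on `I`,
together with the Hölder quotients of the `k`-th derivative. -/
abbrev jIdx (k : ℕ) : Type := (Fin (k + 1) × ↥unitI) ⊕ (↥unitI × ↥unitI)

/-- The `C^r` jet data of `f` (`r = k + α`): its derivatives of order `≤ k = ⌊r⌋` on
`I` and the `α`-Hölder quotients of its `k`-th derivative. -/
def jetFun (r : ℝ) (f : ℝ → ℝ) : jIdx ⌊r⌋₊ → ℝ :=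
  Sum.elim (fun q : Fin (⌊r⌋₊ + 1) × ↥unitI => iteratedDeriv q.1 f (q.2 : ℝ))
    (fun q : ↥unitI × ↥unitI =>
      (iteratedDeriv ⌊r⌋₊ f (q.1 : ℝ) - iteratedDeriv ⌊r⌋₊ f (q.2 : ℝ)) /
        |(q.1 : ℝ) - (q.2 : ℝ)| ^ (r - (⌊r⌋₊ : ℝ)))

/-- The `C^r` topology on maps of `I`: uniform convergence of the `C^r` jet data. -/
def crTop (r : ℝ) : TopologicalSpace (ℝ → ℝ) :=
  TopologicalSpace.induced (fun f => UniformFun.ofFun (jetFun r f)) inferInstance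

/-- The `C^0` topology on maps of `I`: uniform convergence on `I`. -/
def c0Top : TopologicalSpace (ℝ → ℝ) :=
  TopologicalSpace.induced
    (fun f => UniformFun.ofFun (fun x : ↥unitI => f (x : ℝ))) inferInstance

/-- The `C^r` jet of `f` as a point of the Banach space of bounded continuous
functions (junk value `0` if the jet is not bounded continuous). -/
def jetR (r : ℝ) (f : ℝ → ℝ) : BoundedContinuousFunction (jIdx ⌊r⌋₊) ℝ := by
  classical
  exact if h : ∃ g : BoundedContinuousFunction (jIdx ⌊r⌋₊) ℝ, ∀ p, g p = jetFun r f p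
    then h.choose else 0

/-- `S` has (topologically flat) codimension `k` at `x`: near `x` there is a
homeomorphism of the ambient space with `Y × ℝ^k` taking `S` to `Y × {0}`. -/
def HasCodimAt {X : Type} [TopologicalSpace X] (S : Set X) (k : ℕ) (x : X) : Prop :=
  ∃ U : Set X, IsOpen U ∧ x ∈ U ∧
    ∃ (Y : Type) (_ : TopologicalSpace Y) (h : U ≃ₜ Y × (Fin k → ℝ)),
      ∀ u : U, (u : X) ∈ S ↔ (h u).2 = 0

/-- `S` has codimension `k` (at each of its points). -/
def HasCodim {X : Type} [TopologicalSpace X] (S : Set X) (k : ℕ) : Prop :=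
  ∀ x ∈ S, HasCodimAt S k x

/-- A cell: a connected set of codimension `k` whose boundary contains a relatively
open and dense subset of codimension `k+1`. -/
def IsCell {X : Type} [TopologicalSpace X] (S : Set X) : Prop :=
  ∃ k : ℕ, IsConnected S ∧ HasCodim S k ∧
    ∃ B : Set X, B ⊆ frontier S ∧ HasCodim B (k + 1) ∧
      (∃ O : Set X, IsOpen O ∧ B = O ∩ frontier S) ∧ frontier S ⊆ closure B

/-- `S ⊆ E` is an embedded `C^1` Banach submanifold of codimension `b`: near each
of its points it is the graph of a `C^1` map from a closed complemented subspace
whose complement has dimension `b`. -/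
def IsC1SubmanifoldOfCodim {E : Type*} [NormedAddCommGroup E] [NormedSpace ℝ E]
    (S : Set E) (b : ℕ) : Prop :=
  ∀ x ∈ S, ∃ F G : Submodule ℝ E, IsClosed (F : Set E) ∧ IsClosed (G : Set E) ∧
    IsCompl F G ∧ Module.finrank ℝ G = b ∧
    ∃ (ψ : F → G) (U : Set E), ContDiff ℝ 1 (fun u : F => (ψ u : E)) ∧
      IsOpen U ∧ x ∈ U ∧
      ∀ y ∈ U, (y ∈ S ↔ ∃ u : F, (u : E) + (ψ u : E) = y)

/-! ### Period-doubling renormalization and its basin -/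

/-- An affine map with nonzero slope. -/
def IsAffine (Λ : ℝ → ℝ) : Prop := ∃ α β : ℝ, α ≠ 0 ∧ ∀ x, Λ x = α * x + β

/-- `g` is a period-doubling renormalization of `f`: `g = Λ⁻¹ ∘ f² ∘ Λ`, where
`Λ : I → J` is an affine bijection onto a restrictive interval `J` of period 2. -/
def IsPDRenormStep (f g : ℝ → ℝ) : Prop :=
  ∃ (a b : ℝ) (Λ : ℝ → ℝ), RestrictiveInterval f (Set.Icc a b) 2 ∧ IsAffine Λ ∧
    Λ '' unitI = Set.Icc a b ∧ ∀ x ∈ unitI, Λ (g x) = f (f (Λ x))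

/-- A unimodal map of `I` whose (unique) turning point `c` is a critical point of
order `ℓ` and a maximum. -/
def UnimodalOfOrder (k : ℕ∞) (ℓ : ℕ) (g : ℝ → ℝ) (c : ℝ) : Prop :=
  Multimodal g ∧ c ∈ Set.Ioo (-1 : ℝ) 1 ∧ CritOrder k g c ℓ ∧
  MonotoneOn g (Set.Icc (-1) c) ∧ AntitoneOn g (Set.Icc c 1)

/-- `f` belongs to the basin of a unimodal polynomial-like fixed point of the
period-doubling renormalization operator of degree `d`: there is a unimodal fixed
point `F⋆` of period-doubling renormalization extending to a real-symmetric
polynomial-like map of degree `d`, and a sequence of successive period-doubling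
renormalizations of `f` converging (uniformly on `I`) to `F⋆`. -/
def InBasinOfUnimodalPDFixedPoint (f : ℝ → ℝ) (d : ℕ) : Prop :=
  ∃ Fstar : ℝ → ℝ, IsPDRenormStep Fstar Fstar ∧
    (∃ c : ℝ, UnimodalOfOrder ⊤ d Fstar c) ∧
    (∃ (FC : ℂ → ℂ) (U V : Set ℂ), PolyLikeMap FC U V d ∧ RealSymPL FC U V ∧
      (∀ x ∈ unitI, (x : ℂ) ∈ U) ∧ ∀ x ∈ unitI, FC (x : ℂ) = ((Fstar x : ℝ) : ℂ)) ∧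
    ∃ g : ℕ → ℝ → ℝ, g 0 = f ∧ (∀ n, IsPDRenormStep (g n) (g (n + 1))) ∧
      TendstoUniformlyOn (fun n x => g n x) Fstar Filter.atTop unitI

/-- `g` and `f` are topologically conjugate as maps of `I`. -/
def TopConjI (g f : ℝ → ℝ) : Prop :=
  ∃ h : ℝ → ℝ, ContinuousOn h unitI ∧ Set.BijOn h unitI unitI ∧
    ContinuousOn (Function.invFunOn h unitI) unitI ∧
    ∀ x ∈ unitI, h (g x) = f (h x)

/-! ### Spaces of maps as topological spaces -/

/-- The space `A^r_{even,b}(I)` with the `C^r` topology. -/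
def ArEvenSpace (r : ℝ) (b : ℕ) : Type := {f : ℝ → ℝ // SpaceArEven r b f}

instance (r : ℝ) (b : ℕ) : TopologicalSpace (ArEvenSpace r b) :=
  TopologicalSpace.induced Subtype.val (crTop r)

/-- The space `A^r_{b̲}(I)` with the `C^r` topology. -/
def ArBSpace (r : ℝ) {b : ℕ} (bvec : Fin b → ℕ) : Type := {f : ℝ → ℝ // SpaceAr r bvec f}

instance (r : ℝ) {b : ℕ} (bvec : Fin b → ℕ) : TopologicalSpace (ArBSpace r bvec) :=
  TopologicalSpace.induced Subtype.val (crTop r)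

/-- The space `A_{b̲}(I)` of real-analytic maps, as a topological space. -/
def AnalSpace {b : ℕ} (bvec : Fin b → ℕ) : Type := {f : ℝ → ℝ // SpaceAomega bvec f}

instance {b : ℕ} (bvec : Fin b → ℕ) : TopologicalSpace (AnalSpace bvec) :=
  TopologicalSpace.induced Subtype.val c0Top

end

/-
The factors are rigid: `q(1) = q(-1)` forces the affine conjugacy `x ↦ αx + β` to have
`β = 0`, so `q(x) = t xˡ - (t + 1)` with `t = αˡ⁻¹`, and `a = -α - αˡ` is recovered from `t`
because `ℓ - 1` is odd. It remains to read off the `tᵢ` from the composite polynomial,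
innermost first. Since `xˡ` sweeps out `[0, ∞)`, `G ∘ q₁ = G' ∘ q₁'` forces
`G(t z - (t + 1)) = G'(t' z - (t' + 1))`. Both `G` and `G'` begin with an even factor, so they
are even, while a nonconstant polynomial has at most one centre of symmetry; hence the zeros
`1 + 1/t` and `1 + 1/t'` of the two affine maps coincide, giving `t = t'` and then `G = G'`.
-/
namespace Polynomial

variable {K : Type*} [Field K]

theorem comp_C_mul_X_sub_C_injective {a : K} (ha : a ≠ 0) (b : K) :
    Function.Injective fun P : K[X] => P.comp (C a * X - C b) := by
  have hinv : (C a * X - C b).comp (C a⁻¹ * (X + C b)) = X := by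
    simp only [sub_comp, mul_comp, C_comp, X_comp, ← mul_assoc, ← C_mul, mul_inv_cancel₀ ha,
      C_1, one_mul, add_sub_cancel_right]
  intro P Q hPQ
  have := congrArg (·.comp (C a⁻¹ * (X + C b))) hPQ
  simp only [comp_assoc, hinv, comp_X] at this
  exact this

variable [CharZero K]

theorem eq_zero_of_periodic_eval {Q : K[X]} (hQ : Q.natDegree ≠ 0) {c : K}
    (h : Function.Periodic (fun x => Q.eval x) c) : c = 0 := by
  by_contra hc
  have hQc : Q = C (Q.eval 0) := by
    refine eq_of_infinite_eval_eq _ _ ((Set.infinite_range_of_injective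
      (fun m n hmn => by exact_mod_cast mul_right_cancel₀ hc hmn :
        Function.Injective fun n : ℕ => (n : K) * c)).mono ?_)
    rintro _ ⟨n, rfl⟩
    simpa using h.nat_mul_eq n
  exact hQ (by rw [hQc, natDegree_C])

theorem eq_zero_of_even_of_symmetric {Q : K[X]} (hQ : Q.natDegree ≠ 0)
    (heven : ∀ x, Q.eval (-x) = Q.eval x) {c : K}
    (hsym : ∀ u, Q.eval (c + u) = Q.eval (c - u)) : c = 0 := by
  have hper : Function.Periodic (fun x => Q.eval x) (2 * c) := fun z => by
    calc Q.eval (z + 2 * c) = Q.eval (c + (z + c)) := by ring_nf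
      _ = Q.eval (c - (z + c)) := hsym _
      _ = Q.eval (-z) := by ring_nf
      _ = Q.eval z := heven z
  simpa using eq_zero_of_periodic_eval hQ hper

/-- The zeros `b / a` and `b' / a'` of the affine maps are forced to coincide, because both
composites are symmetric about them while `P` and `Q` are symmetric about `0`. -/
theorem div_eq_div_of_even_of_comp_eq {P Q : K[X]} (hP : ∀ x, P.eval (-x) = P.eval x)
    (hQ : ∀ x, Q.eval (-x) = Q.eval x) (hQ0 : Q.natDegree ≠ 0) {a b a' b' : K}
    (ha : a ≠ 0) (ha' : a' ≠ 0) (h : P.comp (C a * X - C b) = Q.comp (C a' * X - C b')) :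
    b / a = b' / a' := by
  have hz (z : K) : P.eval (a * z - b) = Q.eval (a' * z - b') := by
    simpa using congrArg (eval z) h
  have hsym (u : K) : Q.eval ((a' * (b / a) - b') + u) = Q.eval ((a' * (b / a) - b') - u) := by
    have hr := hz (b / a + u / a')
    have hl := hz (b / a - u / a')
    have er : a * (b / a + u / a') - b = a * u / a' := by field_simp; ring
    have el : a * (b / a - u / a') - b = -(a * u / a') := by field_simp; ring
    rw [er] at hr
    rw [el, hP] at hl
    convert hr.symm.trans hl using 2 <;> field_simp <;> ring
  have hc := eq_zero_of_even_of_symmetric hQ0 hQ hsym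
  field_simp at hc ⊢
  linear_combination hc

end Polynomial

noncomputable section StdComp

open Polynomial

variable {K : Type*} [Field K]

/-- The normal form of a factor `q` of type `ℓ` with `q(±1) = -1`. -/
def stdFactor (ℓ : ℕ) (t : K) : K[X] := C t * X ^ ℓ - C (t + 1)

/-- `stdComp ℓ t` is `stdFactor (ℓ (n-1)) (t (n-1)) ∘ ⋯ ∘ stdFactor (ℓ 0) (t 0)`. -/
def stdComp : {n : ℕ} → (Fin n → ℕ) → (Fin n → K) → K[X]
  | 0, _, _ => X
  | _ + 1, ℓ, t => (stdComp (Fin.tail ℓ) (Fin.tail t)).comp (stdFactor (ℓ 0) (t 0))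

@[simp]
theorem eval_stdFactor (ℓ : ℕ) (t x : K) : (stdFactor ℓ t).eval x = t * x ^ ℓ - (t + 1) := by
  simp [stdFactor]

theorem stdFactor_eq_comp_X_pow (ℓ : ℕ) (t : K) :
    stdFactor ℓ t = (C t * X - C (t + 1)).comp (X ^ ℓ) := by
  simp [stdFactor]

theorem natDegree_stdFactor (ℓ : ℕ) {t : K} (ht : t ≠ 0) : (stdFactor ℓ t).natDegree = ℓ := by
  rw [stdFactor, natDegree_sub_C, natDegree_C_mul_X_pow _ _ ht]

theorem natDegree_stdComp {n : ℕ} (ℓ : Fin n → ℕ) {t : Fin n → K} (ht : ∀ i, t i ≠ 0) :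
    (stdComp ℓ t).natDegree = ∏ i, ℓ i := by
  induction n with
  | zero => simp [stdComp]
  | succ n ih =>
    rw [stdComp, natDegree_comp, ih (Fin.tail ℓ) (t := Fin.tail t) fun i => ht i.succ,
      natDegree_stdFactor _ (ht 0), Fin.prod_univ_succ, mul_comm]
    rfl

theorem eval_neg_stdComp {n : ℕ} {ℓ : Fin (n + 1) → ℕ} (hℓ : Even (ℓ 0)) (t : Fin (n + 1) → K)
    (x : K) : (stdComp ℓ t).eval (-x) = (stdComp ℓ t).eval x := by
  simp [stdComp, hℓ.neg_pow]

theorem foldl_ofFn_eq_eval_stdComp {n : ℕ} (ℓ : Fin n → ℕ) (t : Fin n → K) {q : Fin n → K → K}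
    (hq : ∀ i x, q i x = (stdFactor (ℓ i) (t i)).eval x) (x : K) :
    (List.ofFn q).foldl (fun y g => g y) x = (stdComp ℓ t).eval x := by
  induction n generalizing x with
  | zero => simp [stdComp]
  | succ n ih =>
    rw [List.ofFn_succ, List.foldl_cons, ih (Fin.tail ℓ) (Fin.tail t) (fun i => hq i.succ),
      stdComp, eval_comp, hq]

variable [CharZero K]

theorem stdComp_injective {n : ℕ} {ℓ : Fin n → ℕ} (hℓ : ∀ i, Even (ℓ i) ∧ ℓ i ≠ 0)
    {t t' : Fin n → K} (ht : ∀ i, t i ≠ 0) (ht' : ∀ i, t' i ≠ 0)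
    (h : stdComp ℓ t = stdComp ℓ t') : t = t' := by
  induction n with
  | zero => exact Subsingleton.elim _ _
  | succ n ih =>
    set G := stdComp (Fin.tail ℓ) (Fin.tail t)
    set G' := stdComp (Fin.tail ℓ) (Fin.tail t')
    have hA : G.comp (C (t 0) * X - C (t 0 + 1)) = G'.comp (C (t' 0) * X - C (t' 0 + 1)) := by
      apply expand_injective (Nat.pos_of_ne_zero (hℓ 0).2)
      have h : G.comp (stdFactor (ℓ 0) (t 0)) = G'.comp (stdFactor (ℓ 0) (t' 0)) := h
      simpa only [expand_eq_comp_X_pow, comp_assoc, ← stdFactor_eq_comp_X_pow] using h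
    have h0 : t 0 = t' 0 := by
      cases n with
      | zero => simpa [G, G', stdComp] using congrArg (eval 0) hA
      | succ m =>
        have hG'0 : G'.natDegree ≠ 0 := by
          rw [natDegree_stdComp (Fin.tail ℓ) (t := Fin.tail t') fun i => ht' i.succ]
          exact Finset.prod_ne_zero_iff.mpr fun i _ => (hℓ i.succ).2
        have := div_eq_div_of_even_of_comp_eq (eval_neg_stdComp (hℓ 1).1 _)
          (eval_neg_stdComp (hℓ 1).1 _) hG'0 (ht 0) (ht' 0) hA
        field_simp [ht 0, ht' 0] at this
        linear_combination -this
    rw [h0] at hA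
    have htail : Fin.tail t = Fin.tail t' := ih (fun i => hℓ i.succ) (fun i => ht i.succ)
      (fun i => ht' i.succ) (comp_C_mul_X_sub_C_injective (ht' 0) _ hA)
    rw [← Fin.cons_self_tail t, ← Fin.cons_self_tail t', h0, htail]

end StdComp

theorem IsQFactor.exists_eq_stdFactor {ℓ : ℕ} {a : ℝ} {q : ℝ → ℝ} (hℓ : ℓ ≠ 0)
    (hq : IsQFactor ℓ a q) (hm1 : q (-1) = -1) (h1 : q 1 = -1) :
    ∃ α ≠ 0, (∀ x, q x = (stdFactor ℓ (α ^ (ℓ - 1))).eval x) ∧ a = -α - α ^ ℓ := by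
  obtain ⟨α, β, hα, -, hconj⟩ := hq
  have hβ : β = 0 := by
    have e1 := hconj 1
    have e2 := hconj (-1)
    rw [h1] at e1
    rw [hm1] at e2
    have hpow : (α * 1 + β) ^ ℓ = (α * (-1) + β) ^ ℓ := by linear_combination e2 - e1
    rcases (pow_eq_pow_iff_of_ne_zero hℓ).mp hpow with h | ⟨h, -⟩
    · exact absurd (by linarith : α = 0) hα
    · linarith
  subst hβ
  have hαℓ : α ^ ℓ = α * α ^ (ℓ - 1) := by
    rw [← pow_succ', Nat.sub_add_cancel (Nat.pos_of_ne_zero hℓ)]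
  have ha : a = -α - α ^ ℓ := by linear_combination -(hconj 1) + α * h1
  refine ⟨α, hα, fun x => mul_left_cancel₀ hα ?_, ha⟩
  rw [eval_stdFactor]
  linear_combination hconj x + ha + (x ^ ℓ - 1) * hαℓ

/-- Every polynomial `p` of type `b̲` (a vector of positive even
integers) has a unique decomposition: the coefficients `a₁, …, a_b`, and hence the
factor maps `q₁, …, q_b` (as maps of `I`), are uniquely determined by `p`. -/
theorem statement_11 {b : ℕ} (bvec : Fin b → ℕ)
    (heven : ∀ i, Even (bvec i) ∧ 0 < bvec i)
    (p : ℝ → ℝ) (a a' : Fin b → ℝ) (q q' : Fin b → ℝ → ℝ)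
    (h : IsPolyType bvec p a q) (h' : IsPolyType bvec p a' q') :
    a = a' ∧ ∀ (i : Fin b), ∀ x ∈ unitI, q i x = q' i x := by
  have hℓ i : Even (bvec i) ∧ bvec i ≠ 0 := ⟨(heven i).1, (heven i).2.ne'⟩
  choose α hα hq ha using fun i =>
    (h.factor i).exists_eq_stdFactor (hℓ i).2 (h.endpts i).1 (h.endpts i).2
  choose α' hα' hq' ha' using fun i =>
    (h'.factor i).exists_eq_stdFactor (hℓ i).2 (h'.endpts i).1 (h'.endpts i).2
  have hcomp : stdComp bvec (fun i => α i ^ (bvec i - 1))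
      = stdComp bvec (fun i => α' i ^ (bvec i - 1)) := by
    refine Polynomial.funext fun x => ?_
    rw [← foldl_ofFn_eq_eval_stdComp _ _ hq, ← foldl_ofFn_eq_eval_stdComp _ _ hq',
      ← h.comp, ← h'.comp]
  have ht := stdComp_injective hℓ (fun i => pow_ne_zero _ (hα i))
    (fun i => pow_ne_zero _ (hα' i)) hcomp
  have hodd i : Odd (bvec i - 1) :=
    Nat.Even.sub_odd (Nat.one_le_iff_ne_zero.mpr (hℓ i).2) (hℓ i).1 odd_one
  have hαα : α = α' := funext fun i => (hodd i).strictMono_pow.injective (congrFun ht i)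
  exact ⟨funext fun i => by rw [ha, ha', hαα], fun i x _ => by rw [hq, hq', hαα]⟩
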